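/- Let A, B ⊂ ℝ² be bounded open sets of positive measure and consider the sample space S = {(a₁, a₂, b₁, β) ∈ A² × B × [-1/2,1/2) : a₁ ≠ a₂, b₁ + ‖a₂ - a₁‖·M_β(1,0)ᵀ ∈ B}. Then the measure |S| of S satisfies |S| ≤ |A|²·|B|, and for the rigid motion r determined by a uniformly random element of S, the induced density at r equals |r(A) ∩ B|²/|S|. -/

import Mathlib

open MeasureTheory Real

noncomputable section

/-- Rotation of the Euclidean plane by angle `2πα`. -/
def rotE (α : ℝ) (x : EuclideanSpace ℝ (Fin 2)) : EuclideanSpace ℝ (Fin 2) :=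
  (WithLp.equiv 2 (Fin 2 → ℝ)).symm
    ![Real.cos (2 * π * α) * x 0 - Real.sin (2 * π * α) * x 1,
      Real.sin (2 * π * α) * x 0 + Real.cos (2 * π * α) * x 1]

/-- The first standard basis vector `(1,0)ᵀ` of the plane. -/
def e₁ : EuclideanSpace ℝ (Fin 2) := (WithLp.equiv 2 (Fin 2 → ℝ)).symm ![1, 0]

/-- The angle of a plane vector, normalized to a fraction of a full turn. -/
def dirAngle (v : EuclideanSpace ℝ (Fin 2)) : ℝ :=
  Complex.arg (Complex.mk (v 0) (v 1)) / (2 * π)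

/-- The rotation-angle parameter (in `[-1/2, 1/2)`) of the rigid motion mapping
`a₁ ↦ b₁`, `a₂ ↦ b₁ + ‖a₂-a₁‖·M_β(1,0)ᵀ`. -/
def sampleAngle (a₁ a₂ : EuclideanSpace ℝ (Fin 2)) (β : ℝ) : ℝ :=
  Int.fract (β - dirAngle (a₂ - a₁) + 1 / 2) - 1 / 2

/-!
Reparametrize a sample `(a₁, a₂, b₁, β)` as `((a₁, a₂), r)`, where `r = (α, t)` is the rigid motion
it determines. For fixed `(a₁, a₂)` the map `(β, b₁) ↦ (α, t)` is a rotation of the circle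
`ℝ/ℤ` in the angle followed by a translation in `b₁`, so it preserves Lebesgue measure, and `S`
becomes `{((a₁, a₂), r) : a₁ ≠ a₂, a₁, a₂ ∈ A ∩ r⁻¹(B)}`. The law of `r` is thus the marginal of
a restricted product measure, whose density at `r` is the measure of the fibre,
`|A ∩ r⁻¹(B)|² = |r(A) ∩ B|²`. The bound on `|S|` is just `S ⊆ A × A × B × [-1/2, 1/2)`.
-/

namespace MeasureTheory

theorem Measure.prod_diagonal_eq_zero {α : Type*} [MeasurableSpace α] [MeasurableEq α]
    (μ ν : Measure α) [SFinite ν] [NullSingletonClass ν] :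
    μ.prod ν (Set.diagonal α) = 0 := by
  rw [Measure.prod_apply measurableSet_diagonal]
  simp [Set.preimage, Set.diagonal]

theorem Measure.prod_prod_diff_diagonal {α : Type*} [MeasurableSpace α] [MeasurableEq α]
    (μ : Measure α) [SFinite μ] [NullSingletonClass μ] (s : Set α) :
    μ.prod μ (s ×ˢ s \ Set.diagonal α) = μ s ^ 2 := by
  rw [measure_sdiff_null (Measure.prod_diagonal_eq_zero μ μ), Measure.prod_prod, sq]

theorem Measure.map_snd_restrict_prod {α β : Type*} [MeasurableSpace α] [MeasurableSpace β]
    (μ : Measure α) (ν : Measure β) [SFinite μ] [SFinite ν] {s : Set (α × β)}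
    (hs : MeasurableSet s) :
    ((μ.prod ν).restrict s).map Prod.snd = ν.withDensity fun y => μ ((fun x => (x, y)) ⁻¹' s) := by
  ext t ht
  rw [Measure.map_apply measurable_snd ht, Measure.restrict_apply (measurable_snd ht),
    Measure.prod_apply_symm ((measurable_snd ht).inter hs), withDensity_apply _ ht,
    ← lintegral_indicator ht]
  congr with y
  by_cases hy : y ∈ t <;> simp [hy, Set.indicator, Set.preimage_preimage]

theorem measurePreserving_prod_reorder {α β γ δ : Type*} [MeasureSpace α] [MeasureSpace β]
    [MeasureSpace γ] [MeasureSpace δ] [SFinite (volume : Measure α)]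
    [SFinite (volume : Measure β)] [SFinite (volume : Measure γ)] [SFinite (volume : Measure δ)] :
    MeasurePreserving (fun q : α × β × γ × δ => ((q.1, q.2.1), (q.2.2.2, q.2.2.1))) := by
  simp only [Measure.volume_eq_prod]
  exact (measurePreserving_prodAssoc volume volume _).symm.comp
    ((MeasurePreserving.id _).prod ((MeasurePreserving.id _).prod Measure.measurePreserving_swap))

/-- On `[a, a + p)`, the map `x ↦ toIcoMod (x + c)` is the translation by `c` of the circle
`ℝ/pℤ` read in the chart `[a, a + p)`, hence preserves Lebesgue measure. -/
theorem measurePreserving_toIcoMod_add {p : ℝ} (hp : 0 < p) (a c : ℝ) :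
    MeasurePreserving (fun x => toIcoMod hp a (x + c))
      (volume.restrict (Set.Ico a (a + p))) (volume.restrict (Set.Ico a (a + p))) := by
  have := Fact.mk hp
  have hmk : MeasurePreserving ((↑) : ℝ → AddCircle p)
      (volume.restrict (Set.Ico a (a + p))) volume := by
    rw [Measure.restrict_congr_set Ico_ae_eq_Ioc]
    exact AddCircle.measurePreserving_mk p a
  let chart : AddCircle p → ℝ := fun y => (AddCircle.equivIco p a y : ℝ)
  have hchart : MeasurePreserving chart volume (volume.restrict (Set.Ico a (a + p))) := by
    have hm : Measurable chart :=
      measurable_subtype_coe.comp (AddCircle.measurableEquivIco p a).measurable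
    refine ⟨hm, ?_⟩
    rw [← hmk.map_eq, Measure.map_map hm hmk.measurable]
    conv_rhs => rw [← Measure.map_id (μ := volume.restrict _)]
    exact Measure.map_congr ((ae_restrict_iff' measurableSet_Ico).2
      (ae_of_all _ fun x hx => AddCircle.equivIco_coe_of_mem hx))
  exact (hchart.comp (measurePreserving_add_right volume (c : AddCircle p))).comp hmk

end MeasureTheory

local notation "ℝ²" => EuclideanSpace ℝ (Fin 2)
local notation "𝕀" => Set.Ico (-(1 / 2) : ℝ) (1 / 2)

def toComplex : ℝ² ≃ₗᵢ[ℝ] ℂ := Complex.orthonormalBasisOneI.repr.symm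

lemma toComplex_apply (x : ℝ²) : toComplex x = ⟨x 0, x 1⟩ := by
  simp [toComplex, Complex.orthonormalBasisOneI_repr_symm_apply, Complex.ext_iff]

lemma toComplex_rotE (α : ℝ) (x : ℝ²) :
    toComplex (rotE α x) = Circle.exp (2 * π * α) * toComplex x := by
  rw [Circle.coe_exp, Complex.exp_mul_I, ← Complex.ofReal_cos, ← Complex.ofReal_sin]
  apply Complex.ext <;>
    simp only [rotE, WithLp.equiv_symm_apply, toComplex_apply, Matrix.cons_val_zero,
      Matrix.cons_val_one, Complex.mul_re, Complex.mul_im, Complex.add_re, Complex.add_im,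
      Complex.ofReal_re, Complex.ofReal_im, Complex.I_re, Complex.I_im] <;>
    ring

lemma toComplex_e₁ : toComplex e₁ = 1 := by
  simp [toComplex_apply, e₁, Complex.ext_iff]

lemma dirAngle_eq_arg_toComplex (v : ℝ²) :
    dirAngle v = Complex.arg (toComplex v) / (2 * π) := by
  rw [toComplex_apply, dirAngle]

def rotationE (α : ℝ) : ℝ² ≃ₗᵢ[ℝ] ℝ² :=
  toComplex.trans ((rotation (Circle.exp (2 * π * α))).trans toComplex.symm)

@[simp] lemma coe_rotationE (α : ℝ) : ⇑(rotationE α) = rotE α := by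
  ext1 x
  apply toComplex.injective
  simp [rotationE, toComplex_rotE]

lemma rotationE_symm (α : ℝ) : (rotationE α).symm = rotationE (-α) := by
  ext1 x
  apply toComplex.injective
  simp [rotationE, rotation_symm, Circle.exp_neg]

lemma continuous_rotE : Continuous fun p : ℝ × ℝ² => rotE p.1 p.2 :=
  (PiLp.continuous_toLp 2 _).comp (continuous_pi fun i => by
    fin_cases i <;>
      simp only [Fin.zero_eta, Fin.mk_one, Matrix.cons_val_zero, Matrix.cons_val_one] <;>
      fun_prop)

lemma measurable_rotE : Measurable fun p : ℝ × ℝ² => rotE p.1 p.2 :=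
  continuous_rotE.measurable

lemma Measurable.rotE {γ : Type*} [MeasurableSpace γ] {f : γ → ℝ} {g : γ → ℝ²}
    (hf : Measurable f) (hg : Measurable g) : Measurable fun x => _root_.rotE (f x) (g x) :=
  measurable_rotE.comp (f := fun x => (f x, g x)) (hf.prodMk hg)

@[fun_prop]
lemma measurable_dirAngle : Measurable dirAngle := by
  simp_rw [funext dirAngle_eq_arg_toComplex]
  fun_prop

@[fun_prop]
lemma Measurable.sampleAngle {γ : Type*} [MeasurableSpace γ] {f g : γ → ℝ²} {h : γ → ℝ}
    (hf : Measurable f) (hg : Measurable g) (hh : Measurable h) :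
    Measurable fun x => _root_.sampleAngle (f x) (g x) (h x) := by
  unfold _root_.sampleAngle
  fun_prop

lemma sampleAngle_eq_toIcoMod (a₁ a₂ : ℝ²) (β : ℝ) :
    sampleAngle a₁ a₂ β = toIcoMod one_pos (-(1 / 2)) (β + -dirAngle (a₂ - a₁)) := by
  rw [toIcoMod_eq_add_fract_mul, sampleAngle]
  ring_nf

lemma measurePreserving_sampleAngle (a₁ a₂ : ℝ²) :
    MeasurePreserving (sampleAngle a₁ a₂) (volume.restrict 𝕀) (volume.restrict 𝕀) := by
  have h := measurePreserving_toIcoMod_add one_pos (-(1 / 2)) (-dirAngle (a₂ - a₁))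
  rw [show -(1 / 2 : ℝ) + 1 = 1 / 2 by norm_num] at h
  simpa only [← sampleAngle_eq_toIcoMod] using h

def rigidMotion (r : ℝ × ℝ²) : ℝ² ≃ᵐ ℝ² :=
  (rotationE r.1).toMeasurableEquiv.trans (MeasurableEquiv.addRight r.2)

@[simp] lemma coe_rigidMotion (r : ℝ × ℝ²) : ⇑(rigidMotion r) = fun x => rotE r.1 x + r.2 := by
  ext1 x
  simp [rigidMotion]

lemma rigidMotion_symm_apply (r : ℝ × ℝ²) (y : ℝ²) :
    (rigidMotion r).symm y = rotE (-r.1) (y - r.2) := by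
  change (rotationE r.1).symm (y + -r.2) = _
  rw [rotationE_symm, coe_rotationE, sub_eq_add_neg]

lemma measurePreserving_rigidMotion (r : ℝ × ℝ²) :
    MeasurePreserving (rigidMotion r) volume volume := by
  rw [coe_rigidMotion]
  exact (measurePreserving_add_right volume r.2).comp
    (coe_rotationE r.1 ▸ (rotationE r.1).measurePreserving)

lemma measure_rigidMotion_image (r : ℝ × ℝ²) (s : Set ℝ²) :
    volume (rigidMotion r '' s) = volume s := by
  rw [MeasurableEquiv.image_eq_preimage_symm,
    ((measurePreserving_rigidMotion r).symm _).measure_preimage_equiv]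

lemma measurable_measure_rigidMotion_image_inter {A B : Set ℝ²} (hA : MeasurableSet A)
    (hB : MeasurableSet B) : Measurable fun r => volume (rigidMotion r '' A ∩ B) := by
  have hW : MeasurableSet {p : (ℝ × ℝ²) × ℝ² | rotE (-p.1.1) (p.2 - p.1.2) ∈ A ∧ p.2 ∈ B} :=
    (hA.preimage (measurable_fst.fst.neg.rotE (measurable_snd.sub measurable_fst.snd))).inter
      (hB.preimage measurable_snd)
  convert measurable_measure_prodMk_left (ν := volume) hW with r
  ext y
  rw [MeasurableEquiv.image_eq_preimage_symm]
  simp [rigidMotion_symm_apply]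

def sampleMotion (q : ℝ² × ℝ² × ℝ² × ℝ) : ℝ × ℝ² :=
  (sampleAngle q.1 q.2.1 q.2.2.2, q.2.2.1 - rotE (sampleAngle q.1 q.2.1 q.2.2.2) q.1)

/-- Polar form: with `z = a₂ - a₁` seen in `ℂ`, `z = |z| e^{i arg z}` and
`2πβ ≡ 2πα + arg z (mod 2π)` for `α = sampleAngle a₁ a₂ β`. -/
lemma rotE_sampleAngle_sub (a₁ a₂ : ℝ²) (β : ℝ) :
    rotE (sampleAngle a₁ a₂ β) (a₂ - a₁) = ‖a₂ - a₁‖ • rotE β e₁ := by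
  set z := toComplex (a₂ - a₁) with hz_def
  have hz : (‖z‖ : ℂ) * (Circle.exp (Complex.arg z) : ℂ) = z := by
    rw [Circle.coe_exp, Complex.norm_mul_exp_arg_mul_I]
  have hβ : Circle.exp (2 * π * β) =
      Circle.exp (2 * π * sampleAngle a₁ a₂ β) * Circle.exp (Complex.arg z) := by
    rw [← Circle.exp_add]
    refine Circle.exp_eq_exp.2 ⟨⌊β - dirAngle (a₂ - a₁) + 1 / 2⌋, ?_⟩
    rw [sampleAngle, Int.fract, dirAngle_eq_arg_toComplex]
    field_simp
    ring
  apply toComplex.injective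
  rw [toComplex_rotE, map_smul, toComplex_rotE, toComplex_e₁, hβ, ← toComplex.norm_map,
    Circle.coe_mul, Complex.real_smul, ← hz_def]
  linear_combination (↑(Circle.exp (2 * π * sampleAngle a₁ a₂ β)) : ℂ) * hz.symm

lemma rigidMotion_sampleMotion_fst (q : ℝ² × ℝ² × ℝ² × ℝ) :
    rigidMotion (sampleMotion q) q.1 = q.2.2.1 := by
  simp [sampleMotion]

lemma rigidMotion_sampleMotion_snd (q : ℝ² × ℝ² × ℝ² × ℝ) :
    rigidMotion (sampleMotion q) q.2.1 = q.2.2.1 + ‖q.2.1 - q.1‖ • rotE q.2.2.2 e₁ := by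
  rw [← rotE_sampleAngle_sub, ← coe_rotationE, map_sub, coe_rotationE]
  simp only [coe_rigidMotion, sampleMotion]
  abel

def sampleSpace (A B : Set ℝ²) : Set (ℝ² × ℝ² × ℝ² × ℝ) :=
  {q | q.1 ∈ A ∧ q.2.1 ∈ A ∧ q.2.2.1 ∈ B ∧ q.2.2.2 ∈ 𝕀 ∧ q.1 ≠ q.2.1 ∧
    q.2.2.1 + ‖q.2.1 - q.1‖ • rotE q.2.2.2 e₁ ∈ B}

def motionPairs (A B : Set ℝ²) : Set ((ℝ² × ℝ²) × ℝ × ℝ²) :=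
  {p | p.1 ∈ (A ∩ rigidMotion p.2 ⁻¹' B) ×ˢ (A ∩ rigidMotion p.2 ⁻¹' B) \ Set.diagonal ℝ²}

lemma volume_sampleSpace_le (A B : Set ℝ²) :
    volume (sampleSpace A B) ≤ volume A * volume A * volume B :=
  calc volume (sampleSpace A B) ≤ volume (A ×ˢ A ×ˢ B ×ˢ 𝕀) :=
        measure_mono fun _ hq => ⟨hq.1, hq.2.1, hq.2.2.1, hq.2.2.2.1⟩
    _ = volume A * volume A * volume B := by
        simp only [Measure.volume_eq_prod, Measure.prod_prod, Real.volume_Ico, mul_assoc]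
        norm_num

lemma sampleSpace_eq_preimage_motionPairs (A B : Set ℝ²) :
    sampleSpace A B =
      (fun q => ((q.1, q.2.1), sampleMotion q)) ⁻¹' motionPairs A B ∩ {q | q.2.2.2 ∈ 𝕀} := by
  ext q
  simp only [sampleSpace, motionPairs, Set.mem_ofPred_eq, Set.mem_inter_iff, Set.mem_preimage,
    Set.mem_sdiff, Set.mem_prod, Set.mem_diagonal_iff, rigidMotion_sampleMotion_fst,
    rigidMotion_sampleMotion_snd]
  tauto

lemma measurableSet_motionPairs {A B : Set ℝ²} (hA : MeasurableSet A) (hB : MeasurableSet B) :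
    MeasurableSet (motionPairs A B) := by
  have hmotion {f : (ℝ² × ℝ²) × ℝ × ℝ² → ℝ²} (hf : Measurable f) :
      Measurable fun p => rigidMotion p.2 (f p) := by
    simp only [coe_rigidMotion]
    exact (measurable_snd.fst.rotE hf).add measurable_snd.snd
  exact ((hA.preimage measurable_fst.fst).inter (hB.preimage (hmotion measurable_fst.fst))).inter
    ((hA.preimage measurable_fst.snd).inter (hB.preimage (hmotion measurable_fst.snd))) |>.diff
    (measurableSet_diagonal.preimage measurable_fst)

lemma measurePreserving_sampleMotion_reordered :
    MeasurePreserving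
      (fun p : (ℝ² × ℝ²) × ℝ × ℝ² =>
        (p.1, sampleAngle p.1.1 p.1.2 p.2.1, p.2.2 - rotE (sampleAngle p.1.1 p.1.2 p.2.1) p.1.1))
      (volume.prod (volume.restrict (𝕀 ×ˢ Set.univ)))
      (volume.prod (volume.restrict (𝕀 ×ˢ Set.univ))) := by
  rw [Measure.volume_eq_prod ℝ ℝ², ← Measure.restrict_prod_eq_prod_univ]
  have hα : Measurable fun p : (ℝ² × ℝ²) × ℝ × ℝ² => sampleAngle p.1.1 p.1.2 p.2.1 := by
    fun_prop
  have hfibre (a : ℝ² × ℝ²) : MeasurePreserving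
      (fun p : ℝ × ℝ² => (sampleAngle a.1 a.2 p.1, p.2 - rotE (sampleAngle a.1 a.2 p.1) a.1))
      ((volume.restrict 𝕀).prod volume) ((volume.restrict 𝕀).prod volume) :=
    (measurePreserving_sampleAngle a.1 a.2).skew_product
      (g := fun β b => b - rotE (sampleAngle a.1 a.2 β) a.1)
      (hα.comp (f := fun p => (a, p)) measurable_prodMk_left |>.rotE measurable_const
        |> measurable_snd.sub)
      (ae_of_all _ fun β => (measurePreserving_sub_right volume _).map_eq)
  exact (MeasurePreserving.id volume).skew_product
    (hα.prodMk (measurable_snd.snd.sub (hα.rotE measurable_fst.fst)))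
    (ae_of_all _ fun a => (hfibre a).map_eq)

lemma measurePreserving_pair_sampleMotion :
    MeasurePreserving (fun q : ℝ² × ℝ² × ℝ² × ℝ => ((q.1, q.2.1), sampleMotion q))
      (volume.restrict {q | q.2.2.2 ∈ 𝕀}) (volume.prod (volume.restrict (𝕀 ×ˢ Set.univ))) := by
  have h := (measurePreserving_prod_reorder (α := ℝ²) (β := ℝ²) (γ := ℝ²) (δ := ℝ))
    |>.restrict_preimage (s := Set.univ ×ˢ (𝕀 ×ˢ Set.univ))
      (MeasurableSet.univ.prod (measurableSet_Ico.prod .univ))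
  rw [Measure.volume_eq_prod (ℝ² × ℝ²) (ℝ × ℝ²), ← Measure.prod_restrict, Measure.restrict_univ]
    at h
  have hpre : (fun q : ℝ² × ℝ² × ℝ² × ℝ => ((q.1, q.2.1), (q.2.2.2, q.2.2.1))) ⁻¹'
      (Set.univ ×ˢ (𝕀 ×ˢ Set.univ)) = {q | q.2.2.2 ∈ 𝕀} := by
    ext q
    simp
  rw [hpre] at h
  exact measurePreserving_sampleMotion_reordered.comp h

theorem map_sampleMotion_restrict_sampleSpace {A B : Set ℝ²} (hA : MeasurableSet A)
    (hB : MeasurableSet B) :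
    (volume.restrict (sampleSpace A B)).map sampleMotion =
      (volume.restrict (𝕀 ×ˢ Set.univ)).withDensity
        fun r => volume (rigidMotion r '' A ∩ B) ^ 2 := by
  have hM := measurableSet_motionPairs hA hB
  have hΨ := measurePreserving_pair_sampleMotion
  rw [sampleSpace_eq_preimage_motionPairs, ← Measure.restrict_restrict (hΨ.measurable hM)]
  refine (Measure.map_map measurable_snd hΨ.measurable).symm.trans ?_
  rw [(hΨ.restrict_preimage hM).map_eq, Measure.map_snd_restrict_prod _ _ hM]
  congr with r
  rw [Measure.volume_eq_prod]
  change (volume.prod volume)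
    ((A ∩ rigidMotion r ⁻¹' B) ×ˢ (A ∩ rigidMotion r ⁻¹' B) \ Set.diagonal ℝ²) = _
  rw [Measure.prod_prod_diff_diagonal, ← measure_rigidMotion_image r, Set.image_inter_preimage]

theorem stmt17_general (A B : Set (EuclideanSpace ℝ (Fin 2)))
    (hAo : IsOpen A) (hBo : IsOpen B)
    (S : Set (EuclideanSpace ℝ (Fin 2) × EuclideanSpace ℝ (Fin 2) ×
      EuclideanSpace ℝ (Fin 2) × ℝ))
    (hS : S = {q | q.1 ∈ A ∧ q.2.1 ∈ A ∧ q.2.2.1 ∈ B ∧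
      q.2.2.2 ∈ Set.Ico (-(1 / 2) : ℝ) (1 / 2) ∧ q.1 ≠ q.2.1 ∧
      q.2.2.1 + ‖q.2.1 - q.1‖ • rotE q.2.2.2 e₁ ∈ B}) :
    volume S ≤ volume A * volume A * volume B ∧
    Measure.map
        (fun q : EuclideanSpace ℝ (Fin 2) × EuclideanSpace ℝ (Fin 2) ×
            EuclideanSpace ℝ (Fin 2) × ℝ =>
          ((sampleAngle q.1 q.2.1 q.2.2.2 : ℝ),
            q.2.2.1 - rotE (sampleAngle q.1 q.2.1 q.2.2.2) q.1))
        ((volume S)⁻¹ • volume.restrict S) =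
      (volume.restrict
          (Set.Ico (-(1 / 2) : ℝ) (1 / 2) ×ˢ
            (Set.univ : Set (EuclideanSpace ℝ (Fin 2))))).withDensity
        (fun r : ℝ × EuclideanSpace ℝ (Fin 2) =>
          volume ((fun x => rotE r.1 x + r.2) '' A ∩ B) ^ 2 / volume S) := by
  obtain rfl : S = sampleSpace A B := hS
  refine ⟨volume_sampleSpace_le A B, ?_⟩
  have hdensity := (measurable_measure_rigidMotion_image_inter hAo.measurableSet
    hBo.measurableSet).pow_const 2
  calc _ = (volume (sampleSpace A B))⁻¹ • (volume.restrict (sampleSpace A B)).map sampleMotion :=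
        Measure.map_smul _ _ _
    _ = _ := by
      rw [map_sampleMotion_restrict_sampleSpace hAo.measurableSet hBo.measurableSet,
        ← withDensity_smul _ hdensity]
      congr with r
      simp [ENNReal.div_eq_inv_mul]

/-- The `3+1`-points sample space `S` for shapes `A`, `B`: its measure is at
most `|A|²·|B|`, and the rigid motion determined by a uniformly random element
of `S` has density `r ↦ |r(A) ∩ B|²/|S|` on the space of rigid motions
`[-1/2,1/2) × ℝ²`. -/
theorem stmt17 (A B : Set (EuclideanSpace ℝ (Fin 2)))
    (hAo : IsOpen A) (hBo : IsOpen B)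
    (hAb : Bornology.IsBounded A) (hBb : Bornology.IsBounded B)
    (hApos : 0 < volume A) (hBpos : 0 < volume B)
    (S : Set (EuclideanSpace ℝ (Fin 2) × EuclideanSpace ℝ (Fin 2) ×
      EuclideanSpace ℝ (Fin 2) × ℝ))
    (hS : S = {q | q.1 ∈ A ∧ q.2.1 ∈ A ∧ q.2.2.1 ∈ B ∧
      q.2.2.2 ∈ Set.Ico (-(1 / 2) : ℝ) (1 / 2) ∧ q.1 ≠ q.2.1 ∧
      q.2.2.1 + ‖q.2.1 - q.1‖ • rotE q.2.2.2 e₁ ∈ B}) :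
    volume S ≤ volume A * volume A * volume B ∧
    Measure.map
        (fun q : EuclideanSpace ℝ (Fin 2) × EuclideanSpace ℝ (Fin 2) ×
            EuclideanSpace ℝ (Fin 2) × ℝ =>
          ((sampleAngle q.1 q.2.1 q.2.2.2 : ℝ),
            q.2.2.1 - rotE (sampleAngle q.1 q.2.1 q.2.2.2) q.1))
        ((volume S)⁻¹ • volume.restrict S) =
      (volume.restrict
          (Set.Ico (-(1 / 2) : ℝ) (1 / 2) ×ˢ
            (Set.univ : Set (EuclideanSpace ℝ (Fin 2))))).withDensity
        (fun r : ℝ × EuclideanSpace ℝ (Fin 2) =>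
          volume ((fun x => rotE r.1 x + r.2) '' A ∩ B) ^ 2 / volume S) :=
  stmt17_general A B hAo hBo S hS

end
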